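/- For type D_n, the set consisting of all φ_{j;k}(x_{j;1}) and φ'_{j;k}(x_{j;1}) (j ≥ 1, 0 ≤ k ≤ 2n−2) is closed under the action of every operator S_{m;l}: each application of S_{m;l} to a member of this set produces another member of the set. -/

import Mathlib

open scoped Classical

noncomputable section

/-- position (j;i) ↦ (j-1)*n + i in the singly-indexed lattice. -/
def pos (n j i : ℕ) : ℕ := (j - 1) * n + i

/-- the cyclic sequence ι = (…, n, …, 2, 1, n, …, 2, 1): position k ≥ 1 carries index ((k-1) % n)+1. -/
def iotaSeq (n k : ℕ) : ℕ := (k - 1) % n + 1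

variable {I : Type*}

/-- σ_k(x) = x_k + Σ_{j>k} ⟨h_{i_k}, α_{i_j}⟩ x_j. -/
def sigmaPL (a : I → I → ℤ) (ι : ℕ → I) (x : ℕ → ℤ) (k : ℕ) : ℤ :=
  x k + ∑' j : ℕ, if k < j then a (ι k) (ι j) * x j else 0
/-- k^{(+)}: the next position after k carrying the same index. -/
def kplus (ι : ℕ → I) (k : ℕ) : ℕ := sInf {l | k < l ∧ ι l = ι k}

/-- k^{(-)}: the previous position (≥ 1) carrying the same index, 0 if none. -/
def kminus (ι : ℕ → I) (k : ℕ) : ℕ := sSup {l | 0 < l ∧ l < k ∧ ι l = ι k}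

/-- coefficient vector of the linear form β_k = x_k + Σ_{k<j<k^{(+)}} ⟨h_{i_k},α_{i_j}⟩ x_j + x_{k^{(+)}},
with β_0 = 0. -/
def betaF (a : I → I → ℤ) (ι : ℕ → I) (k : ℕ) : ℕ → ℚ := fun j =>
  if k = 0 then 0 else
    (if j = k then 1 else 0)
    + (if k < j ∧ j < kplus ι k then (a (ι k) (ι j) : ℚ) else 0)
    + (if j = kplus ι k then 1 else 0)

/-- the piecewise-linear operator S_k on linear forms (coefficient vectors). -/
def Sop (a : I → I → ℤ) (ι : ℕ → I) (k : ℕ) (φ : ℕ → ℚ) : ℕ → ℚ :=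
  if 0 < φ k then φ - φ k • betaF a ι k else φ - φ k • betaF a ι (kminus ι k)

/-- evaluation of a linear form at a point of ℤ^∞. -/
def evalF (φ : ℕ → ℚ) (x : ℕ → ℤ) : ℚ := ∑' l : ℕ, φ l * (x l : ℚ)

/-- the coordinate linear form x_m. -/
def coordF (m : ℕ) : ℕ → ℚ := fun l => if l = m then 1 else 0

/-- the coordinate linear form x_{j;i}, with the convention x_{j;0} = x_{j;n+1} = 0. -/
def cX (n j i : ℕ) : ℕ → ℚ :=
  if 1 ≤ j ∧ 1 ≤ i ∧ i ≤ n then coordF (pos n j i) else 0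
/-- Cartan matrix of type B_n: a_{n-1,n} = -2, a_{n,n-1} = -1. -/
def aB (n : ℕ) (i j : ℕ) : ℤ :=
  if i = j then 2
  else if i + 1 = j then (if j = n then -2 else -1)
  else if j + 1 = i then -1
  else 0

/-- Cartan matrix of type C_n: a_{n-1,n} = -1, a_{n,n-1} = -2. -/
def aC (n : ℕ) (i j : ℕ) : ℤ :=
  if i = j then 2
  else if i + 1 = j then -1
  else if j + 1 = i then (if i = n then -2 else -1)
  else 0

/-- Cartan matrix of type D_n. -/
def aD (n : ℕ) (i j : ℕ) : ℤ :=
  if i = j then 2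
  else if (i + 1 = j ∧ j + 1 ≤ n) ∨ (j + 1 = i ∧ i + 1 ≤ n)
        ∨ (i + 2 = j ∧ j = n) ∨ (j + 2 = i ∧ i = n) then -1
  else 0

/-- Cartan matrix of type F_4: a_{23} = -2, a_{32} = -1. -/
def aF4 (i j : ℕ) : ℤ :=
  if i = j then 2
  else if i = 2 ∧ j = 3 then -2
  else if i + 1 = j ∨ j + 1 = i then -1
  else 0
/-- φ_{j;k} for type D_n. -/
def phiD (n j : ℕ) : ℕ → (ℕ → ℚ) → (ℕ → ℚ)
  | 0 => id
  | k + 1 => fun φ =>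
      if k + 1 ≤ n then
        Sop (aD n) (iotaSeq n) (pos n j (k + 1)) (phiD n j k φ)
      else
        Sop (aD n) (iotaSeq n) (pos n (j + (k + 1) - n) (2 * n - (k + 1) - 1)) (phiD n j k φ)

/-- φ'_{j;k} for type D_n: as φ_{j;k} but with φ'_{j;n-1} = S_{j;n} φ'_{j;n-2} and
φ'_{j;n} = S_{j;n-2} φ'_{j;n-1}. -/
def phiD' (n j : ℕ) : ℕ → (ℕ → ℚ) → (ℕ → ℚ)
  | 0 => id
  | k + 1 => fun φ =>
      if k + 1 ≤ n - 2 then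
        Sop (aD n) (iotaSeq n) (pos n j (k + 1)) (phiD' n j k φ)
      else if k + 1 = n - 1 then
        Sop (aD n) (iotaSeq n) (pos n j n) (phiD' n j k φ)
      else if k + 1 = n then
        Sop (aD n) (iotaSeq n) (pos n j (n - 2)) (phiD' n j k φ)
      else
        Sop (aD n) (iotaSeq n) (pos n (j + (k + 1) - n) (2 * n - (k + 1) - 1)) (phiD' n j k φ)
/-- the set Ξ'_ι of all forms φ_{j;k}(x_{j;1}) and φ'_{j;k}(x_{j;1}) for type D_n. -/
def XiD (n : ℕ) : Set (ℕ → ℚ) :=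
  {ψ | ∃ j k : ℕ, 1 ≤ j ∧ k ≤ 2 * n - 2 ∧
    (ψ = phiD n j k (cX n j 1) ∨ ψ = phiD' n j k (cX n j 1))}

namespace XiDProof

lemma mul_step {a b n : ℕ} (h : a < b) : a * n + n ≤ b * n := by
  calc a * n + n = (a+1) * n := by ring
  _ ≤ b * n := Nat.mul_le_mul_right _ h

lemma pos_inj {n m l j i : ℕ} (hm : 1 ≤ m) (hl : 1 ≤ l) (hln : l ≤ n)
    (hj : 1 ≤ j) (hi : 1 ≤ i) (hin : i ≤ n) (h : pos n m l = pos n j i) :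
    m = j ∧ l = i := by
  unfold pos at h
  rcases lt_trichotomy m j with hc | hc | hc
  · have h2 := mul_step (n := n) (show m - 1 < j - 1 by omega)
    omega
  · subst hc; omega
  · have h2 := mul_step (n := n) (show j - 1 < m - 1 by omega)
    omega

lemma iotaSeq_pos {n j i : ℕ} (hi : 1 ≤ i) (hin : i ≤ n) :
    iotaSeq n (pos n j i) = i := by
  unfold iotaSeq pos
  have h1 : (j - 1) * n + i - 1 = (i - 1) + (j - 1) * n := by omega
  rw [h1, Nat.add_mul_mod_self_right, Nat.mod_eq_of_lt (by omega)]
  omega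

lemma iotaSeq_congr {n p q : ℕ} (hp : 1 ≤ p) (hq : p < q)
    (h : iotaSeq n q = iotaSeq n p) (hn : 1 ≤ n) : p + n ≤ q := by
  unfold iotaSeq at h
  have h2 : (p - 1) % n = (q - 1) % n := by omega
  have h3 : n ∣ (q - 1) - (p - 1) := (Nat.modEq_iff_dvd' (by omega)).mp h2
  have h4 : n ≤ (q - 1) - (p - 1) := Nat.le_of_dvd (by omega) h3
  omega

lemma iotaSeq_add {n p : ℕ} (hp : 1 ≤ p) : iotaSeq n (p + n) = iotaSeq n p := by
  unfold iotaSeq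
  have h1 : p + n - 1 = (p - 1) + n := by omega
  rw [h1, Nat.add_mod_right]

lemma kplus_eq {n p : ℕ} (hn : 1 ≤ n) (hp : 1 ≤ p) :
    kplus (iotaSeq n) p = p + n := by
  have hmem : p + n ∈ {l | p < l ∧ iotaSeq n l = iotaSeq n p} :=
    ⟨by omega, iotaSeq_add hp⟩
  have hlb : ∀ l ∈ {l | p < l ∧ iotaSeq n l = iotaSeq n p}, p + n ≤ l := by
    rintro l ⟨h1, h2⟩; exact iotaSeq_congr hp h1 h2 hn
  exact le_antisymm (Nat.sInf_le hmem) (hlb _ (Nat.sInf_mem ⟨_, hmem⟩))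

lemma kminus_eq_zero {n p : ℕ} (hn : 1 ≤ n) (hp : p ≤ n) :
    kminus (iotaSeq n) p = 0 := by
  have he : {l | 0 < l ∧ l < p ∧ iotaSeq n l = iotaSeq n p} = ∅ := by
    ext l; simp only [Set.mem_setOf_eq, Set.mem_empty_iff_false, iff_false]
    rintro ⟨h1, h2, h3⟩
    have := iotaSeq_congr h1 h2 h3.symm hn
    omega
  rw [kminus, he, csSup_empty]; rfl

lemma kminus_eq {n p : ℕ} (hn : 1 ≤ n) (hp : n < p) :
    kminus (iotaSeq n) p = p - n := by
  have hmem : p - n ∈ {l | 0 < l ∧ l < p ∧ iotaSeq n l = iotaSeq n p} := by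
    refine ⟨by omega, by omega, ?_⟩
    have := iotaSeq_add (n := n) (p := p - n) (by omega)
    rw [show p - n + n = p by omega] at this
    exact this.symm
  have hub : ∀ l ∈ {l | 0 < l ∧ l < p ∧ iotaSeq n l = iotaSeq n p}, l ≤ p - n := by
    rintro l ⟨h1, h2, h3⟩
    have := iotaSeq_congr h1 h2 h3.symm hn
    omega
  exact le_antisymm (csSup_le ⟨_, hmem⟩ hub) (le_csSup ⟨_, hub⟩ hmem)

lemma cX_apply {n j i p : ℕ} :
    cX n j i p = if 1 ≤ j ∧ 1 ≤ i ∧ i ≤ n ∧ p = (j-1)*n + i then 1 else 0 := by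
  by_cases h2 : p = (j-1)*n + i <;> by_cases h1 : 1 ≤ j ∧ 1 ≤ i ∧ i ≤ n <;>
    simp [cX, coordF, pos, h1, h2] <;> tauto

lemma cX_zero_left {n j : ℕ} : cX n j 0 = 0 := by
  unfold cX; rw [if_neg]; omega

lemma pos_pos {n j i : ℕ} (hi : 1 ≤ i) : 1 ≤ pos n j i := by unfold pos; omega

lemma Sop_of_one {I : Type*} {a : I → I → ℤ} {ι : ℕ → I} {k : ℕ} {φ : ℕ → ℚ}
    (h : φ k = 1) : Sop a ι k φ = φ - betaF a ι k := by
  unfold Sop; rw [h, if_pos one_pos, one_smul]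

lemma Sop_of_negone {I : Type*} {a : I → I → ℤ} {ι : ℕ → I} {k : ℕ} {φ : ℕ → ℚ}
    (h : φ k = -1) : Sop a ι k φ = φ + betaF a ι (kminus ι k) := by
  unfold Sop; rw [h, if_neg (by norm_num), neg_smul, one_smul, sub_neg_eq_add]

lemma Sop_of_zero {I : Type*} {a : I → I → ℤ} {ι : ℕ → I} {k : ℕ} {φ : ℕ → ℚ}
    (h : φ k = 0) : Sop a ι k φ = φ := by
  unfold Sop; rw [h, if_neg (lt_irrefl 0), zero_smul, sub_zero]

set_option maxHeartbeats 2000000 in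
lemma betaF_A {n j i : ℕ} (hn : 4 ≤ n) (hj : 1 ≤ j) (hi : 1 ≤ i) (hin : i ≤ n-3) :
    betaF (aD n) (iotaSeq n) (pos n j i) =
      cX n j i - cX n j (i+1) - cX n (j+1) (i-1) + cX n (j+1) i := by
  have hin' : i ≤ n := by omega
  have hjn : j * n = (j-1) * n + n := by
    conv_lhs => rw [show j = j - 1 + 1 from by omega]
    ring
  funext p
  rw [betaF, if_neg (by have := pos_pos (n:=n) (j:=j) hi; omega),
      kplus_eq (by omega) (pos_pos hi), iotaSeq_pos hi hin']
  rw [show pos n j i = (j-1)*n+i from rfl]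
  simp only [Pi.add_apply, Pi.sub_apply, cX_apply, pos, Nat.add_sub_cancel]
  by_cases hw : (j-1)*n + i < p ∧ p < (j-1)*n + i + n
  · rw [if_pos hw]
    rcases le_or_gt (i + (p - ((j-1)*n + i))) n with hc | hc
    · have hι : iotaSeq n p = i + (p - ((j-1)*n + i)) := by
        have hp' : p = pos n j (i + (p - ((j-1)*n + i))) := by unfold pos; omega
        nth_rewrite 1 [hp']
        exact iotaSeq_pos (by omega) hc
      rw [hι]
      simp only [aD]
      split_ifs <;> first | (exfalso; omega) | (norm_num; done)
    · have hι : iotaSeq n p = i + (p - ((j-1)*n + i)) - n := by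
        have hp' : p = pos n (j+1) (i + (p - ((j-1)*n + i)) - n) := by
          unfold pos; simp only [Nat.add_sub_cancel]; omega
        nth_rewrite 1 [hp']
        exact iotaSeq_pos (by omega) (by omega)
      rw [hι]
      simp only [aD]
      split_ifs <;> first | (exfalso; omega) | (norm_num; done)
  · rw [if_neg hw]
    split_ifs <;> first | (exfalso; omega) | (norm_num; done)

set_option maxHeartbeats 2000000 in
lemma betaF_B {n j i : ℕ} (hn : 4 ≤ n) (hj : 1 ≤ j) (hieq : i = n-2) :
    betaF (aD n) (iotaSeq n) (pos n j i) =
      cX n j i - cX n j (n-1) - cX n j n - cX n (j+1) (n-3) + cX n (j+1) i := by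
  have hi : 1 ≤ i := by omega
  have hin' : i ≤ n := by omega
  have hjn : j * n = (j-1) * n + n := by
    conv_lhs => rw [show j = j - 1 + 1 from by omega]
    ring
  funext p
  rw [betaF, if_neg (by have := pos_pos (n:=n) (j:=j) hi; omega),
      kplus_eq (by omega) (pos_pos hi), iotaSeq_pos hi hin']
  rw [show pos n j i = (j-1)*n+i from rfl]
  simp only [Pi.add_apply, Pi.sub_apply, cX_apply, pos, Nat.add_sub_cancel]
  by_cases hw : (j-1)*n + i < p ∧ p < (j-1)*n + i + n
  · rw [if_pos hw]
    rcases le_or_gt (i + (p - ((j-1)*n + i))) n with hc | hc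
    · have hι : iotaSeq n p = i + (p - ((j-1)*n + i)) := by
        have hp' : p = pos n j (i + (p - ((j-1)*n + i))) := by unfold pos; omega
        nth_rewrite 1 [hp']
        exact iotaSeq_pos (by omega) hc
      rw [hι]
      simp only [aD]
      split_ifs <;> first | (exfalso; omega) | (norm_num; done)
    · have hι : iotaSeq n p = i + (p - ((j-1)*n + i)) - n := by
        have hp' : p = pos n (j+1) (i + (p - ((j-1)*n + i)) - n) := by
          unfold pos; simp only [Nat.add_sub_cancel]; omega
        nth_rewrite 1 [hp']
        exact iotaSeq_pos (by omega) (by omega)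
      rw [hι]
      simp only [aD]
      split_ifs <;> first | (exfalso; omega) | (norm_num; done)
  · rw [if_neg hw]
    split_ifs <;> first | (exfalso; omega) | (norm_num; done)

set_option maxHeartbeats 2000000 in
lemma betaF_C {n j i : ℕ} (hn : 4 ≤ n) (hj : 1 ≤ j) (hieq : i = n-1) :
    betaF (aD n) (iotaSeq n) (pos n j i) =
      cX n j i - cX n (j+1) (n-2) + cX n (j+1) i := by
  have hi : 1 ≤ i := by omega
  have hin' : i ≤ n := by omega
  have hjn : j * n = (j-1) * n + n := by
    conv_lhs => rw [show j = j - 1 + 1 from by omega]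
    ring
  funext p
  rw [betaF, if_neg (by have := pos_pos (n:=n) (j:=j) hi; omega),
      kplus_eq (by omega) (pos_pos hi), iotaSeq_pos hi hin']
  rw [show pos n j i = (j-1)*n+i from rfl]
  simp only [Pi.add_apply, Pi.sub_apply, cX_apply, pos, Nat.add_sub_cancel]
  by_cases hw : (j-1)*n + i < p ∧ p < (j-1)*n + i + n
  · rw [if_pos hw]
    rcases le_or_gt (i + (p - ((j-1)*n + i))) n with hc | hc
    · have hι : iotaSeq n p = i + (p - ((j-1)*n + i)) := by
        have hp' : p = pos n j (i + (p - ((j-1)*n + i))) := by unfold pos; omega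
        nth_rewrite 1 [hp']
        exact iotaSeq_pos (by omega) hc
      rw [hι]
      simp only [aD]
      split_ifs <;> first | (exfalso; omega) | (norm_num; done)
    · have hι : iotaSeq n p = i + (p - ((j-1)*n + i)) - n := by
        have hp' : p = pos n (j+1) (i + (p - ((j-1)*n + i)) - n) := by
          unfold pos; simp only [Nat.add_sub_cancel]; omega
        nth_rewrite 1 [hp']
        exact iotaSeq_pos (by omega) (by omega)
      rw [hι]
      simp only [aD]
      split_ifs <;> first | (exfalso; omega) | (norm_num; done)
  · rw [if_neg hw]
    split_ifs <;> first | (exfalso; omega) | (norm_num; done)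

set_option maxHeartbeats 2000000 in
lemma betaF_Dn {n j i : ℕ} (hn : 4 ≤ n) (hj : 1 ≤ j) (hieq : i = n) :
    betaF (aD n) (iotaSeq n) (pos n j i) =
      cX n j i - cX n (j+1) (n-2) + cX n (j+1) i := by
  have hi : 1 ≤ i := by omega
  have hin' : i ≤ n := by omega
  have hjn : j * n = (j-1) * n + n := by
    conv_lhs => rw [show j = j - 1 + 1 from by omega]
    ring
  funext p
  rw [betaF, if_neg (by have := pos_pos (n:=n) (j:=j) hi; omega),
      kplus_eq (by omega) (pos_pos hi), iotaSeq_pos hi hin']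
  rw [show pos n j i = (j-1)*n+i from rfl]
  simp only [Pi.add_apply, Pi.sub_apply, cX_apply, pos, Nat.add_sub_cancel]
  by_cases hw : (j-1)*n + i < p ∧ p < (j-1)*n + i + n
  · rw [if_pos hw]
    rcases le_or_gt (i + (p - ((j-1)*n + i))) n with hc | hc
    · have hι : iotaSeq n p = i + (p - ((j-1)*n + i)) := by
        have hp' : p = pos n j (i + (p - ((j-1)*n + i))) := by unfold pos; omega
        nth_rewrite 1 [hp']
        exact iotaSeq_pos (by omega) hc
      rw [hι]
      simp only [aD]
      split_ifs <;> first | (exfalso; omega) | (norm_num; done)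
    · have hι : iotaSeq n p = i + (p - ((j-1)*n + i)) - n := by
        have hp' : p = pos n (j+1) (i + (p - ((j-1)*n + i)) - n) := by
          unfold pos; simp only [Nat.add_sub_cancel]; omega
        nth_rewrite 1 [hp']
        exact iotaSeq_pos (by omega) (by omega)
      rw [hι]
      simp only [aD]
      split_ifs <;> first | (exfalso; omega) | (norm_num; done)
  · rw [if_neg hw]
    split_ifs <;> first | (exfalso; omega) | (norm_num; done)

lemma cX_apply_pos' {n j i m l : ℕ} (hm : 1 ≤ m) (hl : 1 ≤ l) (hln : l ≤ n) :
    cX n j i (pos n m l) = if 1 ≤ j ∧ 1 ≤ i ∧ i ≤ n ∧ j = m ∧ i = l then 1 else 0 := by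
  rw [cX_apply]
  by_cases h : 1 ≤ j ∧ 1 ≤ i ∧ i ≤ n
  · by_cases h2 : j = m ∧ i = l
    · obtain ⟨rfl, rfl⟩ := h2
      rw [if_pos ⟨h.1, h.2.1, h.2.2, rfl⟩, if_pos ⟨h.1, h.2.1, h.2.2, rfl, rfl⟩]
    · rw [if_neg, if_neg (by tauto)]
      rintro ⟨_, _, _, he⟩
      have hp := pos_inj hm hl hln h.1 h.2.1 h.2.2 (he : pos n m l = pos n j i)
      exact h2 ⟨hp.1.symm, hp.2.symm⟩
  · rw [if_neg (by tauto), if_neg (by tauto)]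

def F1 (n j i : ℕ) : ℕ → ℚ := cX n j i - cX n (j+1) (i-1)
def F2 (n j : ℕ) : ℕ → ℚ := cX n j (n-1) + cX n j n - cX n (j+1) (n-2)
def F3 (n j : ℕ) : ℕ → ℚ := cX n j n - cX n (j+1) (n-1)
def F3' (n j : ℕ) : ℕ → ℚ := cX n j (n-1) - cX n (j+1) n
def F4 (n j : ℕ) : ℕ → ℚ := cX n j (n-2) - cX n j (n-1) - cX n j n
def F5 (n j i : ℕ) : ℕ → ℚ := cX n j i - cX n j (i+1)

section Comp
variable {n j i : ℕ}

lemma C1 (hn : 4 ≤ n) (hj : 1 ≤ j) (hi : 1 ≤ i) (h2 : i ≤ n-3) :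
    Sop (aD n) (iotaSeq n) (pos n j i) (F1 n j i) = F1 n j (i+1) := by
  have hcoef : F1 n j i (pos n j i) = 1 := by
    simp only [F1, Pi.sub_apply, cX_apply_pos' (n := n) hj hi (by omega)]
    split_ifs <;> first | (exfalso; omega) | (exfalso; simp only [and_true, true_and] at *; omega) | norm_num
  rw [Sop_of_one hcoef, betaF_A hn hj hi h2]
  simp only [F1, Nat.add_sub_cancel]
  abel

lemma C2 (hn : 4 ≤ n) (hj : 1 ≤ j) :
    Sop (aD n) (iotaSeq n) (pos n j (n-2)) (F1 n j (n-2)) = F2 n j := by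
  have hcoef : F1 n j (n-2) (pos n j (n-2)) = 1 := by
    simp only [F1, Pi.sub_apply, cX_apply_pos' (n := n) hj (by omega : 1 ≤ n-2) (by omega)]
    split_ifs <;> first | (exfalso; omega) | (exfalso; simp only [and_true, true_and] at *; omega) | norm_num
  rw [Sop_of_one hcoef, betaF_B hn hj rfl]
  simp only [F1, F2, show n-2-1 = n-3 from rfl]
  abel

lemma C3 (hn : 4 ≤ n) (hj : 1 ≤ j) :
    Sop (aD n) (iotaSeq n) (pos n j (n-1)) (F2 n j) = F3 n j := by
  have hcoef : F2 n j (pos n j (n-1)) = 1 := by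
    simp only [F2, Pi.sub_apply, Pi.add_apply, cX_apply_pos' (n := n) hj (by omega : 1 ≤ n-1) (by omega)]
    split_ifs <;> first | (exfalso; omega) | (exfalso; simp only [and_true, true_and] at *; omega) | norm_num
  rw [Sop_of_one hcoef, betaF_C hn hj rfl]
  simp only [F2, F3]
  abel

lemma C4 (hn : 4 ≤ n) (hj : 1 ≤ j) :
    Sop (aD n) (iotaSeq n) (pos n j n) (F2 n j) = F3' n j := by
  have hcoef : F2 n j (pos n j n) = 1 := by
    simp only [F2, Pi.sub_apply, Pi.add_apply, cX_apply_pos' (n := n) hj (by omega : 1 ≤ n) (le_refl n)]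
    split_ifs <;> first | (exfalso; omega) | (exfalso; simp only [and_true, true_and] at *; omega) | norm_num
  rw [Sop_of_one hcoef, betaF_Dn hn hj rfl]
  simp only [F2, F3']
  abel

lemma C5 (hn : 4 ≤ n) (hj : 1 ≤ j) :
    Sop (aD n) (iotaSeq n) (pos n j n) (F3 n j) = F4 n (j+1) := by
  have hcoef : F3 n j (pos n j n) = 1 := by
    simp only [F3, Pi.sub_apply, cX_apply_pos' (n := n) hj (by omega : 1 ≤ n) (le_refl n)]
    split_ifs <;> first | (exfalso; omega) | (exfalso; simp only [and_true, true_and] at *; omega) | norm_num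
  rw [Sop_of_one hcoef, betaF_Dn hn hj rfl]
  simp only [F3, F4]
  abel

lemma C6 (hn : 4 ≤ n) (hj : 1 ≤ j) :
    Sop (aD n) (iotaSeq n) (pos n j (n-1)) (F3' n j) = F4 n (j+1) := by
  have hcoef : F3' n j (pos n j (n-1)) = 1 := by
    simp only [F3', Pi.sub_apply, cX_apply_pos' (n := n) hj (by omega : 1 ≤ n-1) (by omega)]
    split_ifs <;> first | (exfalso; omega) | (exfalso; simp only [and_true, true_and] at *; omega) | norm_num
  rw [Sop_of_one hcoef, betaF_C hn hj rfl]
  simp only [F3', F4]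
  abel

lemma C7 (hn : 4 ≤ n) (hj : 1 ≤ j) :
    Sop (aD n) (iotaSeq n) (pos n j (n-2)) (F4 n j) = F5 n (j+1) (n-3) := by
  have hcoef : F4 n j (pos n j (n-2)) = 1 := by
    simp only [F4, Pi.sub_apply, cX_apply_pos' (n := n) hj (by omega : 1 ≤ n-2) (by omega)]
    split_ifs <;> first | (exfalso; omega) | (exfalso; simp only [and_true, true_and] at *; omega) | norm_num
  rw [Sop_of_one hcoef, betaF_B hn hj rfl]
  simp only [F4, F5, show n-3+1 = n-2 from by omega]
  abel

lemma C8 (hn : 4 ≤ n) (hj : 1 ≤ j) (hi : 1 ≤ i) (h2 : i ≤ n-3) :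
    Sop (aD n) (iotaSeq n) (pos n j i) (F5 n j i) = F5 n (j+1) (i-1) := by
  have hcoef : F5 n j i (pos n j i) = 1 := by
    simp only [F5, Pi.sub_apply, cX_apply_pos' (n := n) hj hi (by omega)]
    split_ifs <;> first | (exfalso; omega) | (exfalso; simp only [and_true, true_and] at *; omega) | norm_num
  rw [Sop_of_one hcoef, betaF_A hn hj hi h2]
  simp only [F5, show i-1+1 = i from by omega]
  abel

lemma M1 (hn : 4 ≤ n) (hj : 1 ≤ j) (hi : 2 ≤ i) (h2 : i ≤ n-2) :
    Sop (aD n) (iotaSeq n) (pos n (j+1) (i-1)) (F1 n j i) = F1 n j (i-1) := by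
  have e1 : j * n = (j-1) * n + n := by
    conv_lhs => rw [show j = j - 1 + 1 from by omega]
    ring
  have hcoef : F1 n j i (pos n (j+1) (i-1)) = -1 := by
    simp only [F1, Pi.sub_apply, cX_apply_pos' (n := n) (by omega : 1 ≤ j+1) (by omega : 1 ≤ i-1) (by omega)]
    split_ifs <;> first | (exfalso; omega) | (exfalso; simp only [and_true, true_and] at *; omega) | norm_num
  rw [Sop_of_negone hcoef]
  have hkm : kminus (iotaSeq n) (pos n (j+1) (i-1)) = pos n j (i-1) := by
    rw [kminus_eq (by omega) (by unfold pos; simp only [Nat.add_sub_cancel]; omega)]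
    unfold pos; simp only [Nat.add_sub_cancel]; omega
  rw [hkm, betaF_A hn hj (by omega) (by omega)]
  simp only [F1, show i-1+1 = i from by omega]
  abel

lemma M2 (hn : 4 ≤ n) (hj : 1 ≤ j) :
    Sop (aD n) (iotaSeq n) (pos n (j+1) (n-2)) (F2 n j) = F1 n j (n-2) := by
  have e1 : j * n = (j-1) * n + n := by
    conv_lhs => rw [show j = j - 1 + 1 from by omega]
    ring
  have hcoef : F2 n j (pos n (j+1) (n-2)) = -1 := by
    simp only [F2, Pi.sub_apply, Pi.add_apply,
      cX_apply_pos' (n := n) (by omega : 1 ≤ j+1) (by omega : 1 ≤ n-2) (by omega)]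
    split_ifs <;> first | (exfalso; omega) | (exfalso; simp only [and_true, true_and] at *; omega) | norm_num
  rw [Sop_of_negone hcoef]
  have hkm : kminus (iotaSeq n) (pos n (j+1) (n-2)) = pos n j (n-2) := by
    rw [kminus_eq (by omega) (by unfold pos; simp only [Nat.add_sub_cancel]; omega)]
    unfold pos; simp only [Nat.add_sub_cancel]; omega
  rw [hkm, betaF_B hn hj rfl]
  simp only [F1, F2, show n-2-1 = n-3 from rfl]
  abel

lemma M3 (hn : 4 ≤ n) (hj : 1 ≤ j) :
    Sop (aD n) (iotaSeq n) (pos n (j+1) (n-1)) (F3 n j) = F2 n j := by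
  have e1 : j * n = (j-1) * n + n := by
    conv_lhs => rw [show j = j - 1 + 1 from by omega]
    ring
  have hcoef : F3 n j (pos n (j+1) (n-1)) = -1 := by
    simp only [F3, Pi.sub_apply, cX_apply_pos' (n := n) (by omega : 1 ≤ j+1) (by omega : 1 ≤ n-1) (by omega)]
    split_ifs <;> first | (exfalso; omega) | (exfalso; simp only [and_true, true_and] at *; omega) | norm_num
  rw [Sop_of_negone hcoef]
  have hkm : kminus (iotaSeq n) (pos n (j+1) (n-1)) = pos n j (n-1) := by
    rw [kminus_eq (by omega) (by unfold pos; simp only [Nat.add_sub_cancel]; omega)]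
    unfold pos; simp only [Nat.add_sub_cancel]; omega
  rw [hkm, betaF_C hn hj rfl]
  simp only [F2, F3]
  abel

lemma M4 (hn : 4 ≤ n) (hj : 1 ≤ j) :
    Sop (aD n) (iotaSeq n) (pos n (j+1) n) (F3' n j) = F2 n j := by
  have e1 : j * n = (j-1) * n + n := by
    conv_lhs => rw [show j = j - 1 + 1 from by omega]
    ring
  have hcoef : F3' n j (pos n (j+1) n) = -1 := by
    simp only [F3', Pi.sub_apply, cX_apply_pos' (n := n) (by omega : 1 ≤ j+1) (by omega : 1 ≤ n) (le_refl n)]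
    split_ifs <;> first | (exfalso; omega) | (exfalso; simp only [and_true, true_and] at *; omega) | norm_num
  rw [Sop_of_negone hcoef]
  have hkm : kminus (iotaSeq n) (pos n (j+1) n) = pos n j n := by
    rw [kminus_eq (by omega) (by unfold pos; simp only [Nat.add_sub_cancel]; omega)]
    unfold pos; simp only [Nat.add_sub_cancel]; omega
  rw [hkm, betaF_Dn hn hj rfl]
  simp only [F2, F3']
  abel

lemma M5 (hn : 4 ≤ n) (hj : 2 ≤ j) :
    Sop (aD n) (iotaSeq n) (pos n j (n-1)) (F4 n j) = F3' n (j-1) := by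
  have e3 : (j-1-1) * n + n = (j-1) * n := by
    conv_rhs => rw [show j - 1 = j - 1 - 1 + 1 from by omega]
    ring
  have hcoef : F4 n j (pos n j (n-1)) = -1 := by
    simp only [F4, Pi.sub_apply, cX_apply_pos' (n := n) (by omega : 1 ≤ j) (by omega : 1 ≤ n-1) (by omega)]
    split_ifs <;> first | (exfalso; omega) | (exfalso; simp only [and_true, true_and] at *; omega) | norm_num
  rw [Sop_of_negone hcoef]
  have hkm : kminus (iotaSeq n) (pos n j (n-1)) = pos n (j-1) (n-1) := by
    rw [kminus_eq (by omega) (by unfold pos; omega)]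
    unfold pos; omega
  rw [hkm, betaF_C hn (by omega) rfl]
  simp only [F3', F4, show j-1+1 = j from by omega]
  abel

lemma M6 (hn : 4 ≤ n) (hj : 2 ≤ j) :
    Sop (aD n) (iotaSeq n) (pos n j n) (F4 n j) = F3 n (j-1) := by
  have e3 : (j-1-1) * n + n = (j-1) * n := by
    conv_rhs => rw [show j - 1 = j - 1 - 1 + 1 from by omega]
    ring
  have hcoef : F4 n j (pos n j n) = -1 := by
    simp only [F4, Pi.sub_apply, cX_apply_pos' (n := n) (by omega : 1 ≤ j) (by omega : 1 ≤ n) (le_refl n)]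
    split_ifs <;> first | (exfalso; omega) | (exfalso; simp only [and_true, true_and] at *; omega) | norm_num
  rw [Sop_of_negone hcoef]
  have hkm : kminus (iotaSeq n) (pos n j n) = pos n (j-1) n := by
    rw [kminus_eq (by omega) (by unfold pos; omega)]
    unfold pos; omega
  rw [hkm, betaF_Dn hn (by omega) rfl]
  simp only [F3, F4, show j-1+1 = j from by omega]
  abel

lemma M7 (hn : 4 ≤ n) (hj : 2 ≤ j) (h2 : i + 1 ≤ n-3) :
    Sop (aD n) (iotaSeq n) (pos n j (i+1)) (F5 n j i) = F5 n (j-1) (i+1) := by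
  have e3 : (j-1-1) * n + n = (j-1) * n := by
    conv_rhs => rw [show j - 1 = j - 1 - 1 + 1 from by omega]
    ring
  have hcoef : F5 n j i (pos n j (i+1)) = -1 := by
    simp only [F5, Pi.sub_apply, cX_apply_pos' (n := n) (by omega : 1 ≤ j) (by omega : 1 ≤ i+1) (by omega)]
    split_ifs <;> first | (exfalso; omega) | (exfalso; simp only [and_true, true_and] at *; omega) | norm_num
  rw [Sop_of_negone hcoef]
  have hkm : kminus (iotaSeq n) (pos n j (i+1)) = pos n (j-1) (i+1) := by
    rw [kminus_eq (by omega) (by unfold pos; omega)]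
    unfold pos; omega
  rw [hkm, betaF_A hn (by omega) (by omega) h2]
  simp only [F5, show j-1+1 = j from by omega, Nat.add_sub_cancel]
  abel

lemma M8 (hn : 4 ≤ n) (hj : 2 ≤ j) :
    Sop (aD n) (iotaSeq n) (pos n j (n-2)) (F5 n j (n-3)) = F4 n (j-1) := by
  have e3 : (j-1-1) * n + n = (j-1) * n := by
    conv_rhs => rw [show j - 1 = j - 1 - 1 + 1 from by omega]
    ring
  have hcoef : F5 n j (n-3) (pos n j (n-2)) = -1 := by
    simp only [F5, Pi.sub_apply, cX_apply_pos' (n := n) (by omega : 1 ≤ j) (by omega : 1 ≤ n-2) (by omega)]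
    split_ifs <;> first | (exfalso; omega) | (exfalso; simp only [and_true, true_and] at *; omega) | norm_num
  rw [Sop_of_negone hcoef]
  have hkm : kminus (iotaSeq n) (pos n j (n-2)) = pos n (j-1) (n-2) := by
    rw [kminus_eq (by omega) (by unfold pos; omega)]
    unfold pos; omega
  rw [hkm, betaF_B hn (by omega) rfl]
  simp only [F4, F5, show j-1+1 = j from by omega, show n-3+1 = n-2 from by omega]
  abel

end Comp

def Ff (n j k : ℕ) : ℕ → ℚ :=
  if k ≤ n-3 then F1 n j (k+1)
  else if k = n-2 then F2 n j
  else if k = n-1 then F3 n j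
  else if k = n then F4 n (j+1)
  else F5 n (j+k-n+1) (2*n-k-2)

def Ff' (n j k : ℕ) : ℕ → ℚ := if k ≤ n-2 then Ff n j k else F3' n j

lemma phiD_eq {n j : ℕ} (hn : 4 ≤ n) (hj : 1 ≤ j) :
    ∀ k, k ≤ 2*n-2 → phiD n j k (cX n j 1) = Ff n j k := by
  intro k
  induction k with
  | zero =>
    intro _
    show cX n j 1 = Ff n j 0
    unfold Ff
    rw [if_pos (by omega : 0 ≤ n-3)]
    unfold F1
    norm_num [cX_zero_left]
  | succ k ih =>
    intro hk
    have ihh := ih (by omega)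
    simp only [phiD]
    by_cases c1 : k+1 ≤ n-3
    · rw [if_pos (by omega : k+1 ≤ n), ihh,
        show Ff n j k = F1 n j (k+1) from by unfold Ff; rw [if_pos (by omega)],
        C1 hn hj (by omega) c1]
      unfold Ff
      rw [if_pos c1]
    · by_cases c2 : k+1 = n-2
      · rw [if_pos (by omega : k+1 ≤ n), ihh,
          show Ff n j k = F1 n j (k+1) from by unfold Ff; rw [if_pos (by omega)],
          c2, C2 hn hj]
        unfold Ff
        rw [if_neg (by omega), if_pos rfl]
      · by_cases c3 : k+1 = n-1
        · rw [if_pos (by omega : k+1 ≤ n), ihh,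
            show Ff n j k = F2 n j from by
              unfold Ff; rw [if_neg (by omega), if_pos (by omega)],
            c3, C3 hn hj]
          unfold Ff
          rw [if_neg (by omega), if_neg (by omega), if_pos rfl]
        · by_cases c4 : k+1 = n
          · rw [if_pos (by omega : k+1 ≤ n), ihh,
              show Ff n j k = F3 n j from by
                unfold Ff; rw [if_neg (by omega), if_neg (by omega), if_pos (by omega)],
              c4, C5 hn hj]
            unfold Ff
            rw [if_neg (by omega), if_neg (by omega), if_neg (by omega), if_pos rfl]
          · by_cases c5 : k = n
            · rw [if_neg (by omega), ihh,
                show Ff n j k = F4 n (j+1) from by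
                  unfold Ff
                  rw [if_neg (by omega), if_neg (by omega), if_neg (by omega), if_pos c5],
                show j+(k+1)-n = j+1 from by omega,
                show 2*n-(k+1)-1 = n-2 from by omega,
                C7 hn (by omega)]
              unfold Ff
              rw [if_neg (by omega), if_neg (by omega), if_neg (by omega), if_neg (by omega),
                show j+(k+1)-n+1 = j+1+1 from by omega,
                show 2*n-(k+1)-2 = n-3 from by omega]
            · rw [if_neg (by omega), ihh,
                show Ff n j k = F5 n (j+k-n+1) (2*n-k-2) from by
                  unfold Ff
                  rw [if_neg (by omega), if_neg (by omega), if_neg (by omega), if_neg (by omega)],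
                show j+(k+1)-n = j+k-n+1 from by omega,
                show 2*n-(k+1)-1 = 2*n-k-2 from by omega,
                C8 hn (by omega) (by omega) (by omega)]
              unfold Ff
              rw [if_neg (by omega), if_neg (by omega), if_neg (by omega), if_neg (by omega),
                show j+(k+1)-n+1 = j+k-n+1+1 from by omega,
                show 2*n-(k+1)-2 = 2*n-k-2-1 from by omega]

lemma phiD'_eq {n j : ℕ} (hn : 4 ≤ n) (hj : 1 ≤ j) :
    ∀ k, k ≤ 2*n-2 → phiD' n j k (cX n j 1) = Ff' n j k := by
  intro k
  induction k with
  | zero =>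
    intro _
    show cX n j 1 = Ff' n j 0
    unfold Ff' Ff
    rw [if_pos (by omega : 0 ≤ n-2), if_pos (by omega : 0 ≤ n-3)]
    unfold F1
    norm_num [cX_zero_left]
  | succ k ih =>
    intro hk
    have ihh := ih (by omega)
    simp only [phiD']
    by_cases c1 : k+1 ≤ n-3
    · rw [if_pos (by omega : k+1 ≤ n-2), ihh,
        show Ff' n j k = F1 n j (k+1) from by
          unfold Ff' Ff; rw [if_pos (by omega), if_pos (by omega)],
        C1 hn hj (by omega) c1]
      unfold Ff' Ff
      rw [if_pos (by omega), if_pos c1]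
    · by_cases c2 : k+1 = n-2
      · rw [if_pos (by omega : k+1 ≤ n-2), ihh,
          show Ff' n j k = F1 n j (k+1) from by
            unfold Ff' Ff; rw [if_pos (by omega), if_pos (by omega)],
          c2, C2 hn hj]
        unfold Ff' Ff
        rw [if_pos (by omega), if_neg (by omega), if_pos rfl]
      · by_cases c3 : k+1 = n-1
        · rw [if_neg (by omega), if_pos c3, ihh,
            show Ff' n j k = F2 n j from by
              unfold Ff' Ff
              rw [if_pos (by omega), if_neg (by omega), if_pos (by omega)],
            C4 hn hj]
          unfold Ff'
          rw [if_neg (by omega)]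
        · by_cases c4 : k+1 = n
          · rw [if_neg (by omega), if_neg (by omega), if_pos c4, ihh,
              show Ff' n j k = F3' n j from by unfold Ff'; rw [if_neg (by omega)]]
            have h0 : F3' n j (pos n j (n-2)) = 0 := by
              simp only [F3', Pi.sub_apply,
                cX_apply_pos' (n := n) hj (by omega : 1 ≤ n-2) (by omega)]
              split_ifs <;> first | (exfalso; omega) | (exfalso; simp only [and_true, true_and] at *; omega) | norm_num
            rw [Sop_of_zero h0]
            unfold Ff'
            rw [if_neg (by omega)]
          · rw [if_neg (by omega), if_neg (by omega), if_neg (by omega), ihh,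
              show Ff' n j k = F3' n j from by unfold Ff'; rw [if_neg (by omega)]]
            have h0 : F3' n j (pos n (j+(k+1)-n) (2*n-(k+1)-1)) = 0 := by
              simp only [F3', Pi.sub_apply,
                cX_apply_pos' (n := n) (by omega : 1 ≤ j+(k+1)-n) (by omega : 1 ≤ 2*n-(k+1)-1) (by omega)]
              split_ifs <;> first | (exfalso; omega) | (exfalso; simp only [and_true, true_and] at *; omega) | norm_num
            rw [Sop_of_zero h0]
            unfold Ff'
            rw [if_neg (by omega)]

section Mem
variable {n j i : ℕ}

lemma mem_F1 (hn : 4 ≤ n) (hj : 1 ≤ j) (hi : 1 ≤ i) (h2 : i ≤ n-2) : F1 n j i ∈ XiD n := by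
  refine ⟨j, i-1, hj, by omega, Or.inl ?_⟩
  rw [phiD_eq hn hj (i-1) (by omega)]
  unfold Ff
  rw [if_pos (by omega : i-1 ≤ n-3), show i-1+1 = i from by omega]

lemma mem_F2 (hn : 4 ≤ n) (hj : 1 ≤ j) : F2 n j ∈ XiD n := by
  refine ⟨j, n-2, hj, by omega, Or.inl ?_⟩
  rw [phiD_eq hn hj (n-2) (by omega)]
  unfold Ff
  rw [if_neg (by omega), if_pos rfl]

lemma mem_F3 (hn : 4 ≤ n) (hj : 1 ≤ j) : F3 n j ∈ XiD n := by
  refine ⟨j, n-1, hj, by omega, Or.inl ?_⟩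
  rw [phiD_eq hn hj (n-1) (by omega)]
  unfold Ff
  rw [if_neg (by omega), if_neg (by omega), if_pos rfl]

lemma mem_F3' (hn : 4 ≤ n) (hj : 1 ≤ j) : F3' n j ∈ XiD n := by
  refine ⟨j, n-1, hj, by omega, Or.inr ?_⟩
  rw [phiD'_eq hn hj (n-1) (by omega)]
  unfold Ff'
  rw [if_neg (by omega)]

lemma mem_F4 (hn : 4 ≤ n) (hj : 2 ≤ j) : F4 n j ∈ XiD n := by
  refine ⟨j-1, n, by omega, by omega, Or.inl ?_⟩
  rw [phiD_eq hn (by omega) n (by omega)]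
  unfold Ff
  rw [if_neg (by omega), if_neg (by omega), if_neg (by omega), if_pos rfl,
    show j-1+1 = j from by omega]

lemma mem_F5 (hn : 4 ≤ n) (h2 : i ≤ n-3) (hjge : n-i ≤ j) : F5 n j i ∈ XiD n := by
  refine ⟨j-(n-1-i), 2*n-2-i, by omega, by omega, Or.inl ?_⟩
  rw [phiD_eq hn (by omega) (2*n-2-i) (by omega)]
  unfold Ff
  rw [if_neg (by omega), if_neg (by omega), if_neg (by omega), if_neg (by omega),
    show j-(n-1-i)+(2*n-2-i)-n+1 = j from by omega,
    show 2*n-(2*n-2-i)-2 = i from by omega]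

end Mem

section Clos
variable {n m l j i : ℕ}

lemma clos_F1 (hn : 4 ≤ n) (hm : 1 ≤ m) (hl : 1 ≤ l) (hln : l ≤ n)
    (hj : 1 ≤ j) (hi : 1 ≤ i) (h2 : i ≤ n-2) :
    Sop (aD n) (iotaSeq n) (pos n m l) (F1 n j i) ∈ XiD n := by
  by_cases hA : m = j ∧ l = i
  · obtain ⟨rfl, rfl⟩ := hA
    by_cases hc : l ≤ n-3
    · rw [C1 hn hj hl hc]
      exact mem_F1 hn hj (by omega) (by omega)
    · rw [show l = n-2 from by omega, C2 hn hj]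
      exact mem_F2 hn hj
  · by_cases hB : m = j+1 ∧ l = i-1 ∧ 2 ≤ i
    · obtain ⟨rfl, rfl, hi2⟩ := hB
      rw [M1 hn hj hi2 h2]
      exact mem_F1 hn hj (by omega) (by omega)
    · have h0 : F1 n j i (pos n m l) = 0 := by
        simp only [F1, Pi.sub_apply, cX_apply_pos' (n := n) hm hl hln]
        split_ifs <;> first | (exfalso; omega) | (exfalso; simp only [and_true, true_and] at *; omega) | norm_num
      rw [Sop_of_zero h0]
      exact mem_F1 hn hj hi h2

lemma clos_F2 (hn : 4 ≤ n) (hm : 1 ≤ m) (hl : 1 ≤ l) (hln : l ≤ n) (hj : 1 ≤ j) :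
    Sop (aD n) (iotaSeq n) (pos n m l) (F2 n j) ∈ XiD n := by
  by_cases hA : m = j ∧ l = n-1
  · obtain ⟨rfl, rfl⟩ := hA
    rw [C3 hn hj]
    exact mem_F3 hn hj
  · by_cases hB : m = j ∧ l = n
    · obtain ⟨rfl, rfl⟩ := hB
      rw [C4 hn hj]
      exact mem_F3' hn hj
    · by_cases hC : m = j+1 ∧ l = n-2
      · obtain ⟨rfl, rfl⟩ := hC
        rw [M2 hn hj]
        exact mem_F1 hn hj (by omega) (by omega)
      · have h0 : F2 n j (pos n m l) = 0 := by
          simp only [F2, Pi.sub_apply, Pi.add_apply, cX_apply_pos' (n := n) hm hl hln]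
          split_ifs <;> first | (exfalso; omega) | (exfalso; simp only [and_true, true_and] at *; omega) | norm_num
        rw [Sop_of_zero h0]
        exact mem_F2 hn hj

lemma clos_F3 (hn : 4 ≤ n) (hm : 1 ≤ m) (hl : 1 ≤ l) (hln : l ≤ n) (hj : 1 ≤ j) :
    Sop (aD n) (iotaSeq n) (pos n m l) (F3 n j) ∈ XiD n := by
  by_cases hA : m = j ∧ l = n
  · obtain ⟨rfl, rfl⟩ := hA
    rw [C5 hn hj]
    exact mem_F4 hn (by omega)
  · by_cases hB : m = j+1 ∧ l = n-1
    · obtain ⟨rfl, rfl⟩ := hB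
      rw [M3 hn hj]
      exact mem_F2 hn hj
    · have h0 : F3 n j (pos n m l) = 0 := by
        simp only [F3, Pi.sub_apply, cX_apply_pos' (n := n) hm hl hln]
        split_ifs <;> first | (exfalso; omega) | (exfalso; simp only [and_true, true_and] at *; omega) | norm_num
      rw [Sop_of_zero h0]
      exact mem_F3 hn hj

lemma clos_F3' (hn : 4 ≤ n) (hm : 1 ≤ m) (hl : 1 ≤ l) (hln : l ≤ n) (hj : 1 ≤ j) :
    Sop (aD n) (iotaSeq n) (pos n m l) (F3' n j) ∈ XiD n := by
  by_cases hA : m = j ∧ l = n-1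
  · obtain ⟨rfl, rfl⟩ := hA
    rw [C6 hn hj]
    exact mem_F4 hn (by omega)
  · by_cases hB : m = j+1 ∧ l = n
    · obtain ⟨rfl, rfl⟩ := hB
      rw [M4 hn hj]
      exact mem_F2 hn hj
    · have h0 : F3' n j (pos n m l) = 0 := by
        simp only [F3', Pi.sub_apply, cX_apply_pos' (n := n) hm hl hln]
        split_ifs <;> first | (exfalso; omega) | (exfalso; simp only [and_true, true_and] at *; omega) | norm_num
      rw [Sop_of_zero h0]
      exact mem_F3' hn hj

lemma clos_F4 (hn : 4 ≤ n) (hm : 1 ≤ m) (hl : 1 ≤ l) (hln : l ≤ n) (hj : 2 ≤ j) :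
    Sop (aD n) (iotaSeq n) (pos n m l) (F4 n j) ∈ XiD n := by
  by_cases hA : m = j ∧ l = n-2
  · obtain ⟨rfl, rfl⟩ := hA
    rw [C7 hn (by omega)]
    exact mem_F5 hn (by omega) (by omega)
  · by_cases hB : m = j ∧ l = n-1
    · obtain ⟨rfl, rfl⟩ := hB
      rw [M5 hn hj]
      exact mem_F3' hn (by omega)
    · by_cases hC : m = j ∧ l = n
      · obtain ⟨rfl, rfl⟩ := hC
        rw [M6 hn hj]
        exact mem_F3 hn (by omega)
      · have h0 : F4 n j (pos n m l) = 0 := by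
          simp only [F4, Pi.sub_apply, cX_apply_pos' (n := n) hm hl hln]
          split_ifs <;> first | (exfalso; omega) | (exfalso; simp only [and_true, true_and] at *; omega) | norm_num
        rw [Sop_of_zero h0]
        exact mem_F4 hn hj

lemma clos_F5 (hn : 4 ≤ n) (hm : 1 ≤ m) (hl : 1 ≤ l) (hln : l ≤ n)
    (h2 : i ≤ n-3) (hjge : n-i ≤ j) :
    Sop (aD n) (iotaSeq n) (pos n m l) (F5 n j i) ∈ XiD n := by
  by_cases hA : m = j ∧ l = i
  · obtain ⟨rfl, rfl⟩ := hA
    rw [C8 hn (by omega) hl h2]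
    exact mem_F5 hn (by omega) (by omega)
  · by_cases hB : m = j ∧ l = i+1
    · obtain ⟨rfl, rfl⟩ := hB
      by_cases hc : i+1 ≤ n-3
      · rw [M7 hn (by omega) hc]
        exact mem_F5 hn (by omega) (by omega)
      · rw [show i = n-3 from by omega, show n-3+1 = n-2 from by omega, M8 hn (by omega)]
        exact mem_F4 hn (by omega)
    · have h0 : F5 n j i (pos n m l) = 0 := by
        simp only [F5, Pi.sub_apply, cX_apply_pos' (n := n) hm hl hln]
        split_ifs <;> first | (exfalso; omega) | (exfalso; simp only [and_true, true_and] at *; omega) | norm_num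
      rw [Sop_of_zero h0]
      exact mem_F5 hn h2 hjge

end Clos

end XiDProof

theorem typeD_Xi_closed (n : ℕ) (hn : 4 ≤ n) (m l : ℕ) (hm : 1 ≤ m) (hl : 1 ≤ l)
    (hln : l ≤ n) (ψ : ℕ → ℚ) (hψ : ψ ∈ XiD n) :
    Sop (aD n) (iotaSeq n) (pos n m l) ψ ∈ XiD n := by
  open XiDProof in
  obtain ⟨j, k, hj, hk, hc | hc⟩ := hψ
  · rw [hc, phiD_eq hn hj k hk]
    unfold Ff
    by_cases c1 : k ≤ n-3
    · rw [if_pos c1]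
      exact clos_F1 hn hm hl hln hj (by omega) (by omega)
    · by_cases c2 : k = n-2
      · rw [if_neg c1, if_pos c2]
        exact clos_F2 hn hm hl hln hj
      · by_cases c3 : k = n-1
        · rw [if_neg c1, if_neg c2, if_pos c3]
          exact clos_F3 hn hm hl hln hj
        · by_cases c4 : k = n
          · rw [if_neg c1, if_neg c2, if_neg c3, if_pos c4]
            exact clos_F4 hn hm hl hln (by omega)
          · rw [if_neg c1, if_neg c2, if_neg c3, if_neg c4]
            exact clos_F5 hn hm hl hln (by omega) (by omega)
  · rw [hc, phiD'_eq hn hj k hk]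
    unfold Ff'
    by_cases c0 : k ≤ n-2
    · rw [if_pos c0]
      unfold Ff
      by_cases c1 : k ≤ n-3
      · rw [if_pos c1]
        exact clos_F1 hn hm hl hln hj (by omega) (by omega)
      · rw [if_neg c1, if_pos (by omega : k = n-2)]
        exact clos_F2 hn hm hl hln hj
    · rw [if_neg c0]
      exact clos_F3' hn hm hl hln hj
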